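/- If λ is a singular cardinal that is the supremum of an increasing ω-sequence of supercompact cardinals ⟨κ_n : n < ω⟩, then Δ_{λ,λ⁺} holds: for every ν < λ, every stationary S ⊆ E^{λ⁺}_{<λ}, and every algebra A on λ⁺ with ν many operations, there is a subalgebra A' of A whose order type is a regular cardinal below λ such that S ∩ A' is stationary in sup(A'). -/

import Mathlib

/-- `β` is an accumulation point of `C`. -/
def accPts (C : Set Ordinal) : Set Ordinal :=
  {β | 0 < β ∧ ∀ x < β, ∃ y ∈ C, x < y ∧ y < β}

/-- `C` is a closed unbounded subset of the ordinal `σ`. -/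
def IsClubIn (C : Set Ordinal) (σ : Ordinal) : Prop :=
  C ⊆ Set.Iio σ ∧ (∀ α < σ, ∃ β ∈ C, α ≤ β) ∧ ∀ α < σ, α ∈ accPts C → α ∈ C

/-- `S` is stationary in the ordinal `σ`. -/
def IsStatIn (S : Set Ordinal) (σ : Ordinal) : Prop :=
  ∀ C, IsClubIn C σ → (S ∩ C).Nonempty

/-- `P_κ(μ)`: subsets of `μ` of size `< κ`. -/
def Pk (κ μ : Cardinal.{0}) :=
  {x : Set Ordinal // x ⊆ Set.Iio μ.ord ∧ Cardinal.mk ↥x < Cardinal.lift.{1} κ}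

/-- `U` is a normal, fine, `κ`-complete ultrafilter on `P_κ(μ)`. -/
def IsNormalFineUF (κ μ : Cardinal) (U : Set (Set (Pk κ μ))) : Prop :=
  Set.univ ∈ U ∧ ∅ ∉ U ∧
  (∀ A B : Set (Pk κ μ), A ∈ U → A ⊆ B → B ∈ U) ∧
  (∀ A B : Set (Pk κ μ), A ∈ U → B ∈ U → A ∩ B ∈ U) ∧
  (∀ A : Set (Pk κ μ), A ∈ U ∨ (Set.univ \ A) ∈ U) ∧
  (∀ o : Ordinal, o < κ.ord → ∀ f : Ordinal → Set (Pk κ μ),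
    (∀ i, i < o → f i ∈ U) → {x | ∀ i, i < o → x ∈ f i} ∈ U) ∧
  (∀ α, α < μ.ord → {x : Pk κ μ | α ∈ x.val} ∈ U) ∧
  (∀ F : Pk κ μ → Ordinal, {x | F x ∈ x.val} ∈ U → ∃ α, {x | F x = α} ∈ U)

/-- `κ` is supercompact: it is `μ`-supercompact for every `μ ≥ κ`. -/
def IsSupercompact (κ : Cardinal) : Prop :=
  ∀ μ : Cardinal, κ ≤ μ → ∃ U : Set (Set (Pk κ μ)), IsNormalFineUF κ μ U

/-- `B` is closed under all the operations of the algebra. -/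
def ClosedUnderOps {ι : Type} (n : ι → ℕ) (f : ∀ i, (Fin (n i) → Ordinal) → Ordinal)
    (B : Set Ordinal) : Prop :=
  ∀ i (v : Fin (n i) → Ordinal), (∀ j, v j ∈ B) → f i v ∈ B

/-- The order type of a set of ordinals. -/
noncomputable def SetOType (s : Set Ordinal) : Ordinal.{1} :=
  @Ordinal.type _ (Subrel ((· < ·) : Ordinal → Ordinal → Prop) s)
    (inferInstanceAs (IsWellOrder _ (Subrel (· < ·) (· ∈ s))))

/-!
Fix `m` with `ν < κ_m` such that the points of `S` of cofinality `< κ_m` are still stationary in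
`λ⁺` (otherwise the clubs witnessing this for all `m` would meet in a club avoiding `S`), and a
normal fine ultrafilter on `P_{κ_m}(λ⁺)`; the subalgebra is a suitable `x` from it. Almost every
`x` is closed under the operations (normality turns closure into a diagonal intersection), has
regular order type, necessarily `< κ_m` (a short cofinal sequence in `otp x` would be represented,
almost everywhere, by fewer than `λ⁺` ordinals, and a bound for these caps the sequence), and
reflects `S`: if clubs `C_x ⊆ sup x` avoided `S ∩ x`, the ordinals `α` with `sup (x ∩ α) ∈ C_x` for
almost all `x` would form a set whose closure is a club of `λ⁺` and which is closed under limits of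
cofinality `< κ_m`; a point `α ∈ S` of it gives `α = sup (x ∩ α) ∈ S ∩ x ∩ C_x` for almost all `x`.
-/

open Ordinal Set Cardinal Order

theorem setOType_mono {s t : Set Ordinal} (h : s ⊆ t) : SetOType s ≤ SetOType t :=
  type_mono h

theorem setOType_Iio (b : Ordinal) : SetOType (Iio b) = lift b :=
  type_lt_Iio b

theorem card_setOType (s : Set Ordinal) : (SetOType s).card = #s :=
  card_type (α := s) (· < ·)

theorem setOType_inter_Iio {s : Set Ordinal} {ξ : Ordinal} (hξ : ξ ∈ s) :
    SetOType (s ∩ Iio ξ) = typein (α := s) (· < ·) ⟨ξ, hξ⟩ := by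
  rw [← type_Iio_lt]
  exact OrderIso.ordinalType_congr (α := ↥(s ∩ Iio ξ)) (β := Iio (⟨ξ, hξ⟩ : s))
    { toFun a := ⟨⟨a.1, a.2.1⟩, a.2.2⟩
      invFun b := ⟨b.1.1, b.1.2, b.2⟩
      map_rel_iff' := Iff.rfl }

theorem setOType_inter_Iio_lt {s : Set Ordinal} {ξ : Ordinal} (hξ : ξ ∈ s) :
    SetOType (s ∩ Iio ξ) < SetOType s := by
  rw [setOType_inter_Iio hξ]
  exact typein_lt_type _ _

theorem inter_Iio_inter_Iio_of_le {s : Set Ordinal} {ξ α : Ordinal} (h : ξ ≤ α) :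
    s ∩ Iio α ∩ Iio ξ = s ∩ Iio ξ := by
  rw [inter_assoc, Iio_inter_Iio, min_eq_right h]

theorem setOType_inter_Iio_lt_of_lt {s : Set Ordinal} {ξ α : Ordinal} (hξ : ξ ∈ s) (h : ξ < α) :
    SetOType (s ∩ Iio ξ) < SetOType (s ∩ Iio α) := by
  simpa only [inter_Iio_inter_Iio_of_le h.le] using
    setOType_inter_Iio_lt (s := s ∩ Iio α) ⟨hξ, h⟩

theorem exists_setOType_inter_Iio_eq {s : Set Ordinal} {i : Ordinal} (hi : i < SetOType s) :
    ∃ ξ ∈ s, SetOType (s ∩ Iio ξ) = i := by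
  obtain ⟨a, rfl⟩ := typein_surj (α := s) (· < ·) hi
  exact ⟨a.1, a.2, setOType_inter_Iio a.2⟩

theorem exists_lt_setOType_inter_Iio_eq {s : Set Ordinal} {α : Ordinal} {i : Ordinal}
    (hi : i < SetOType (s ∩ Iio α)) : ∃ ξ ∈ s, ξ < α ∧ SetOType (s ∩ Iio ξ) = i := by
  obtain ⟨ξ, ⟨hξs, hξα⟩, rfl⟩ := exists_setOType_inter_Iio_eq hi
  exact ⟨ξ, hξs, hξα, by rw [inter_Iio_inter_Iio_of_le hξα.le]⟩

theorem exists_isRegular_setOType_eq {B : Set Ordinal.{0}} {κ : Cardinal.{0}}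
    (hB : #B < Cardinal.lift.{1} κ) (hω : ω ≤ SetOType B)
    (hreg : (SetOType B).cof.ord = SetOType B) :
    ∃ c : Cardinal, c.IsRegular ∧ c < κ ∧ SetOType B = Ordinal.lift.{1} c.ord := by
  obtain ⟨c, hcκ, hc⟩ := Cardinal.lt_lift_iff.1 ((cof_le_card _).trans_lt (card_setOType B ▸ hB))
  have hlim : IsSuccLimit (SetOType B) := by
    rw [← hreg]
    exact isSuccLimit_ord (ord_le_ord.1 (by rwa [ord_aleph0, hreg]))
  refine ⟨c, isRegular_lift_iff.1 (hc ▸ isRegular_cof hlim), hcκ, ?_⟩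
  rw [lift_ord, hc, hreg]

theorem exists_cofinal_fun (o : Ordinal) : ∃ G : Ordinal → Ordinal,
    (∀ i < o.cof.ord, G i < o) ∧ ∀ t < o, ∃ i < o.cof.ord, t ≤ G i := by
  obtain ⟨f, hf⟩ := exists_isFundamentalSeq (o := o) rfl
  refine ⟨fun i => if h : i < o.cof.ord then f ⟨i, h⟩ else 0, fun i hi => ?_, fun t ht => ?_⟩
  · simp only [dif_pos hi]
    exact (f ⟨i, hi⟩).2
  · obtain ⟨_, ⟨i, rfl⟩, hti⟩ := hf.isCofinal_range ⟨t, ht⟩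
    refine ⟨i, i.2, ?_⟩
    simp only [dif_pos (show (i : Ordinal) < o.cof.ord from i.2)]
    exact hti

theorem Cardinal.IsRegular.exists_lt_ord_forall_le {c : Cardinal} (hc : c.IsRegular)
    {α : Ordinal} (hα : α < c.ord) (f : Ordinal → Ordinal) (hf : ∀ β < α, f β < c.ord) :
    ∃ γ < c.ord, ∀ β < α, f β ≤ γ := by
  refine ⟨⨆ t : α.ToType, f (ToType.mk.symm t),
    iSup_lt_of_lt_cof ?_ fun t => hf _ (ToType.mk.symm t).2, fun β hβ => ?_⟩
  · rwa [mk_toType, hc.cof_ord, ← lt_ord]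
  · simpa using Ordinal.le_iSup (fun t : α.ToType => f (ToType.mk.symm t)) (ToType.mk ⟨β, hβ⟩)

theorem natCast_le_of_strictMono {κs : ℕ → Cardinal} (h : StrictMono κs) (m : ℕ) :
    (m : Cardinal) ≤ κs m := by
  induction m with
  | zero => simp
  | succ m ih =>
    rw [Nat.cast_succ]
    exact add_one_le_of_lt (ih.trans_lt (h m.lt_succ_self))

theorem sSup_inter_Iio_le (s : Set Ordinal) (β : Ordinal) : sSup (s ∩ Iio β) ≤ β :=
  csSup_le' fun _ h => h.2.le

theorem sSup_inter_Iio_iSup (s : Set Ordinal.{0}) (c : ℕ → Ordinal.{0}) :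
    sSup (s ∩ Iio (⨆ n, c n)) = ⨆ n, sSup (s ∩ Iio (c n)) := by
  refine le_antisymm (csSup_le' fun ξ ⟨hξs, hξ⟩ => ?_) (Ordinal.iSup_le fun n => ?_)
  · obtain ⟨n, hn⟩ := Ordinal.lt_iSup_iff.1 hξ
    exact (le_csSup (bddAbove_Iio.mono inter_subset_right) ⟨hξs, hn⟩).trans
      (Ordinal.le_iSup (fun n => sSup (s ∩ Iio (c n))) n)
  · exact csSup_le_csSup' (bddAbove_Iio.mono inter_subset_right)
      (inter_subset_inter_right _ (Iio_subset_Iio (Ordinal.le_iSup c n)))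

theorem IsStatIn.mono {S T : Set Ordinal} {σ : Ordinal} (h : S ⊆ T) (hS : IsStatIn S σ) :
    IsStatIn T σ :=
  fun C hC => (hS C hC).mono (inter_subset_inter_left C h)

theorem isClubIn_Iio (σ : Ordinal) : IsClubIn (Iio σ) σ :=
  ⟨subset_rfl, fun α hα => ⟨α, hα, le_rfl⟩, fun _ hα _ => hα⟩

theorem accPts_mono {X Y : Set Ordinal} (h : X ⊆ Y) : accPts X ⊆ accPts Y :=
  fun _ hα => ⟨hα.1, fun x hx => (hα.2 x hx).imp fun _ ⟨hy, h'⟩ => ⟨h hy, h'⟩⟩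

theorem isSuccLimit_of_mem_accPts {X : Set Ordinal} {α : Ordinal} (h : α ∈ accPts X) :
    IsSuccLimit α := by
  refine isSuccLimit_iff.2 ⟨h.1.ne', isSuccPrelimit_of_succ_lt fun a ha => ?_⟩
  obtain ⟨y, -, hay, hy⟩ := h.2 a ha
  exact (succ_le_of_lt hay).trans_lt hy

theorem exists_cofinal_fun_of_mem_accPts {E : Set Ordinal} {α : Ordinal} (hα : α ∈ accPts E) :
    ∃ G : Ordinal → Ordinal,
      (∀ i < α.cof.ord, G i ∈ E ∧ G i < α) ∧ ∀ t < α, ∃ i < α.cof.ord, t ≤ G i := by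
  obtain ⟨G, hGlt, hGcof⟩ := exists_cofinal_fun α
  have hE : ∀ i, ∃ e, i < α.cof.ord → e ∈ E ∧ G i < e ∧ e < α := fun i =>
    if hi : i < α.cof.ord then (hα.2 _ (hGlt i hi)).imp fun _ h _ => h
    else ⟨0, fun h => absurd h hi⟩
  choose e he using hE
  refine ⟨e, fun i hi => ⟨(he i hi).1, (he i hi).2.2⟩, fun t ht => ?_⟩
  obtain ⟨i, hi, hti⟩ := hGcof t ht
  exact ⟨i, hi, hti.trans (he i hi).2.1.le⟩

theorem iSup_mem_accPts {c : ℕ → Ordinal} {X : Set Ordinal}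
    (hX : ∀ n, ∃ y ∈ X, c n ≤ y ∧ y < ⨆ n, c n) : (⨆ n, c n) ∈ accPts X := by
  refine ⟨?_, fun z hz => ?_⟩
  · obtain ⟨y, -, -, hy⟩ := hX 0
    exact pos_of_gt hy
  · obtain ⟨n, hn⟩ := Ordinal.lt_iSup_iff.1 hz
    obtain ⟨y, hy, hny, hy'⟩ := hX n
    exact ⟨y, hy, hn.trans_le hny, hy'⟩

theorem exists_strictMono_chain {σ : Ordinal.{0}} (hσ : ℵ₀ < σ.cof)
    (P : ℕ → Ordinal → Ordinal → Prop) (hP : ∀ n, ∀ β < σ, ∃ β' < σ, β < β' ∧ P n β β')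
    {a : Ordinal} (ha : a < σ) :
    ∃ c : ℕ → Ordinal, c 0 = a ∧ StrictMono c ∧ (∀ n, P n (c n) (c (n + 1))) ∧ ⨆ n, c n < σ := by
  choose g hgσ hg using hP
  let c : ℕ → Iio σ := fun n =>
    Nat.rec (motive := fun _ => Iio σ) ⟨a, ha⟩ (fun n p => ⟨g n p.1 p.2, hgσ n p.1 p.2⟩) n
  exact ⟨fun n => c n, rfl, strictMono_nat_of_lt_succ fun n => (hg n _ _).1,
    fun n => (hg n _ _).2, iSup_lt_of_lt_cof (by rwa [mk_nat]) fun n => (c n).2⟩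

theorem isClubIn_setOf_isSuccLimit_inter_iInter {σ : Ordinal.{0}} (hσ : ℵ₀ < σ.cof)
    {C : ℕ → Set Ordinal} (hC : ∀ m, IsClubIn (C m) σ) :
    IsClubIn ({α | IsSuccLimit α} ∩ ⋂ m, C m) σ := by
  have hσlim : IsSuccLimit σ := one_lt_cof_iff.1 (one_lt_aleph0.trans hσ)
  refine ⟨fun α hα => (hC 0).1 (mem_iInter.1 hα.2 0), fun a ha => ?_, fun α hα hacc => ?_⟩
  · obtain ⟨c, rfl, hc, hcC, hcσ⟩ := exists_strictMono_chain hσ (fun n _ β' => β' ∈ C n.unpair.1)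
      (fun n β hβ => (hC _).2.1 _ (hσlim.succ_lt hβ) |>.imp fun β' ⟨hβ'C, hβ'⟩ =>
        ⟨(hC _).1 hβ'C, lt_of_lt_of_le (lt_succ β) hβ', hβ'C⟩) ha
    have hacc : ∀ m, (⨆ n, c n) ∈ accPts (C m) := fun m => iSup_mem_accPts fun n => by
      refine ⟨c (Nat.pair m n + 1), by simpa using hcC (Nat.pair m n), ?_, ?_⟩
      · exact hc.monotone ((Nat.right_le_pair m n).trans (Nat.le_succ _))
      · exact (hc (Nat.lt_succ_self _)).trans_le (Ordinal.le_iSup c _)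
    exact ⟨_, ⟨isSuccLimit_of_mem_accPts (hacc 0), mem_iInter.2 fun m => (hC m).2.2 _ hcσ (hacc m)⟩,
      Ordinal.le_iSup c 0⟩
  · exact ⟨isSuccLimit_of_mem_accPts hacc, mem_iInter.2 fun m =>
      (hC m).2.2 α hα (accPts_mono (fun _ hy => mem_iInter.1 hy.2 m) hacc)⟩

theorem IsStatIn.exists_isStatIn_of_subset_iUnion {σ : Ordinal.{0}} (hσ : ℵ₀ < σ.cof)
    {S : Set Ordinal} (hS : IsStatIn S σ) {T : ℕ → Set Ordinal} (hT : S ⊆ ⋃ m, T m) :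
    ∃ m, IsStatIn {α | α ∈ S ∧ IsSuccLimit α ∧ α ∈ T m} σ := by
  by_contra! h
  choose D hD hSD using fun m => by
    simpa only [IsStatIn, not_forall, exists_prop, not_nonempty_iff_eq_empty] using h m
  obtain ⟨α, hαS, hαlim, hαD⟩ := hS _ (isClubIn_setOf_isSuccLimit_inter_iInter hσ hD)
  obtain ⟨m, hm⟩ := mem_iUnion.1 (hT hαS)
  exact (hSD m).subset ⟨⟨hαS, hαlim, hm⟩, mem_iInter.1 hαD m⟩

theorem isClubIn_union_accPts {E : Set Ordinal} {σ : Ordinal} (hE : E ⊆ Iio σ)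
    (hunb : ∀ a < σ, ∃ β ∈ E, a ≤ β) : IsClubIn (E ∪ (accPts E ∩ Iio σ)) σ := by
  refine ⟨union_subset hE inter_subset_right, fun a ha => ?_, fun γ hγ hacc => .inr ⟨?_, hγ⟩⟩
  · obtain ⟨β, hβ, h⟩ := hunb a ha
    exact ⟨β, .inl hβ, h⟩
  · refine ⟨hacc.1, fun y hy => ?_⟩
    obtain ⟨z, hz | ⟨hz, -⟩, hyz, hzγ⟩ := hacc.2 y hy
    · exact ⟨z, hz, hyz, hzγ⟩
    · obtain ⟨w, hw, hyw, hwz⟩ := hz.2 y hyz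
      exact ⟨w, hw, hyw, hwz.trans hzγ⟩

theorem Pk.bddAbove {κ μ : Cardinal.{0}} (x : Pk κ μ) : BddAbove x.val :=
  bddAbove_Iio.mono x.2.1

def traceSet {κ μ : Cardinal.{0}} (l : Filter (Pk κ μ)) (C : Pk κ μ → Set Ordinal) :
    Set Ordinal :=
  {α | α < μ.ord ∧ ∀ᶠ x in l, sSup (x.val ∩ Iio α) ∈ C x}

namespace IsNormalFineUF

variable {κ μ : Cardinal.{0}} {U : Set (Set (Pk κ μ))} (hU : IsNormalFineUF κ μ U)

def toUltrafilter : Ultrafilter (Pk κ μ) :=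
  Ultrafilter.ofComplNotMemIff
    { sets := U
      univ_sets := hU.1
      sets_of_superset := fun hA hAB => hU.2.2.1 _ _ hA hAB
      inter_sets := fun hA hB => hU.2.2.2.1 _ _ hA hB }
    fun A => ⟨fun hA => (hU.2.2.2.2.1 A).resolve_right (by rwa [← compl_eq_univ_sdiff]),
      fun hA hAc => hU.2.1 (by simpa using hU.2.2.2.1 _ _ hA hAc)⟩

-- reducible, so that `∀ᶠ x in hU.ae` still sees the `Ultrafilter` API (`NeBot`, `eventually_not`)
abbrev ae : Filter (Pk κ μ) :=
  hU.toUltrafilter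

theorem eventually_mem {α : Ordinal} (hα : α < μ.ord) :
    ∀ᶠ x in hU.ae, α ∈ x.val :=
  hU.2.2.2.2.2.2.1 α hα

theorem eventually_forall_lt_of_lt_ord {o : Ordinal} (ho : o < κ.ord)
    {p : Ordinal → Pk κ μ → Prop} (h : ∀ i < o, ∀ᶠ x in hU.ae, p i x) :
    ∀ᶠ x in hU.ae, ∀ i < o, p i x :=
  hU.2.2.2.2.2.1 o ho (fun i => {x | p i x}) h

theorem eventually_forall_of_mk_lt {T : Type} (hT : #T < κ) {p : T → Pk κ μ → Prop}
    (h : ∀ t, ∀ᶠ x in hU.ae, p t x) : ∀ᶠ x in hU.ae, ∀ t, p t x := by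
  obtain ⟨r, _, hr⟩ := exists_ord_eq T
  have := hU.eventually_forall_lt_of_lt_ord (hr ▸ ord_lt_ord.2 hT)
    (p := fun i x => ∀ t, typein r t = i → p t x) fun i hi => by
      obtain ⟨t, rfl⟩ := typein_surj r hi
      filter_upwards [h t] with x hx t' ht'
      exact (typein_inj r).1 ht' ▸ hx
  filter_upwards [this] with x hx t using hx _ (typein_lt_type r t) t rfl

theorem exists_eventually_mem_and {P : Pk κ μ → Ordinal → Prop}
    (h : ∀ᶠ x in hU.ae, ∃ ξ ∈ x.val, P x ξ) :
    ∃ ξ < μ.ord, ∀ᶠ x in hU.ae, ξ ∈ x.val ∧ P x ξ := by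
  let F (x : Pk κ μ) : Ordinal := Classical.epsilon fun ξ => ξ ∈ x.val ∧ P x ξ
  have hF : ∀ᶠ x in hU.ae, F x ∈ x.val ∧ P x (F x) :=
    h.mono fun x ⟨ξ, hξ, hP⟩ => Classical.epsilon_spec (p := fun ξ => ξ ∈ x.val ∧ P x ξ) ⟨ξ, hξ, hP⟩
  obtain ⟨ξ, hξ⟩ := hU.2.2.2.2.2.2.2 F (hF.mono fun x hx => hx.1)
  have hξU : ∀ᶠ x in hU.ae, ξ ∈ x.val ∧ P x ξ := by
    filter_upwards [hF, (hξ : ∀ᶠ x in hU.ae, F x = ξ)] with x hx hFx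
    rwa [← hFx]
  obtain ⟨x, hx⟩ := hξU.exists
  exact ⟨ξ, x.2.1 hx.1, hξU⟩

theorem eventually_forall_mem {p : Ordinal → Pk κ μ → Prop}
    (h : ∀ α < μ.ord, ∀ᶠ x in hU.ae, p α x) :
    ∀ᶠ x in hU.ae, ∀ α ∈ x.val, p α x := by
  by_contra hc
  rw [← Ultrafilter.eventually_not] at hc
  obtain ⟨α, hα, hαU⟩ := hU.exists_eventually_mem_and (P := fun x α => ¬p α x)
    (hc.mono fun x hx => by simpa using hx)
  obtain ⟨x, hx, hpx⟩ := (hαU.and (h α hα)).exists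
  exact hx.2 hpx

theorem eventually_forall_apply_mem {k : ℕ} {g : (Fin k → Ordinal) → Ordinal}
    (hg : ∀ v, (∀ j, v j < μ.ord) → g v < μ.ord) :
    ∀ᶠ x in hU.ae, ∀ v : Fin k → Ordinal, (∀ j, v j ∈ x.val) → g v ∈ x.val := by
  induction k with
  | zero =>
    filter_upwards [hU.eventually_mem (hg ![] finZeroElim)] with x hx v _
    rwa [Subsingleton.elim v ![]]
  | succ k ih =>
    filter_upwards [hU.eventually_forall_mem fun α hα =>
      ih (g := fun v => g (Fin.cons α v)) fun v hv => hg _ (Fin.cases hα hv)] with x hx v hv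
    simpa using hx (v 0) (hv 0) (Fin.tail v) fun j => hv j.succ

theorem eventually_closedUnderOps {ι : Type} (hι : #ι < κ) (n : ι → ℕ)
    (f : ∀ i, (Fin (n i) → Ordinal) → Ordinal)
    (hf : ∀ i v, (∀ j, v j < μ.ord) → f i v < μ.ord) :
    ∀ᶠ x in hU.ae, ClosedUnderOps n f x.val :=
  hU.eventually_forall_of_mk_lt hι fun i => hU.eventually_forall_apply_mem (hf i)

theorem eventually_Iio_omega0_subset (hκ : ℵ₀ < κ) (hμ : ℵ₀ ≤ μ) :
    ∀ᶠ x in hU.ae, Iio ω ⊆ x.val := by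
  filter_upwards [hU.eventually_forall_of_mk_lt (by rwa [mk_nat]) fun n : ℕ =>
    hU.eventually_mem ((natCast_lt_omega0 n).trans_le (ord_aleph0 ▸ ord_le_ord.2 hμ))] with x hx
  intro a ha
  obtain ⟨n, rfl⟩ := lt_omega0.1 ha
  exact hx n

theorem exists_eventually_eq_setOType_inter_Iio {g : Pk κ μ → Ordinal.{1}}
    (hg : ∀ᶠ x in hU.ae, g x < SetOType x.val) :
    ∃ α < μ.ord, ∀ᶠ x in hU.ae, g x = SetOType (x.val ∩ Iio α) := by
  obtain ⟨α, hα, h⟩ := hU.exists_eventually_mem_and (hg.mono fun _ hx =>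
    exists_setOType_inter_Iio_eq hx)
  exact ⟨α, hα, h.mono fun _ hx => hx.2.symm⟩

theorem eventually_ord_cof_setOType_eq (hμ : μ.IsRegular) :
    ∀ᶠ x in hU.ae, (SetOType x.val).cof.ord = SetOType x.val := by
  by_contra hcon
  rw [← Ultrafilter.eventually_not] at hcon
  obtain ⟨α₁, hα₁, hcof⟩ := hU.exists_eventually_eq_setOType_inter_Iio
    (hcon.mono fun x hx => (ord_cof_le _).lt_of_ne hx)
  choose G hGlt hGcof using fun x : Pk κ μ => exists_cofinal_fun (SetOType x.val)
  have hγ : ∀ β, ∃ γ < μ.ord, ∀ᶠ x in hU.ae,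
      β < α₁ → G x (SetOType (x.val ∩ Iio β)) = SetOType (x.val ∩ Iio γ) := by
    intro β
    by_cases hβ : β < α₁
    · obtain ⟨γ, hγ, h⟩ := hU.exists_eventually_eq_setOType_inter_Iio
        (g := fun x => G x (SetOType (x.val ∩ Iio β))) <| by
          filter_upwards [hcof, hU.eventually_mem (hβ.trans hα₁)] with x hx hβx
          exact hGlt x _ (hx ▸ setOType_inter_Iio_lt_of_lt hβx hβ)
      exact ⟨γ, hγ, h.mono fun _ h _ => h⟩
    · exact ⟨0, hμ.ord_pos, .of_forall fun _ h => absurd h hβ⟩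
  choose γ hγμ hγ using hγ
  obtain ⟨γ', hγ'μ, hγ'⟩ := hμ.exists_lt_ord_forall_le hα₁ γ fun β _ => hγμ β
  have hsucc : succ γ' < μ.ord := (isSuccLimit_ord hμ.aleph0_le).succ_lt hγ'μ
  obtain ⟨x, hxcof, hxγ, hγ'x, hsuccx⟩ := (hcof.and ((hU.eventually_forall_mem fun β _ => hγ β).and
    ((hU.eventually_mem hγ'μ).and (hU.eventually_mem hsucc)))).exists
  -- every `G x i` is at most `SetOType (x ∩ Iio γ')`, so `G x` is not cofinal in `SetOType x`
  obtain ⟨i, hi, hti⟩ := hGcof x _ (setOType_inter_Iio_lt hsuccx)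
  rw [hxcof] at hi
  obtain ⟨ξ, hξx, hξα₁, rfl⟩ := exists_lt_setOType_inter_Iio_eq hi
  rw [hxγ ξ hξx hξα₁] at hti
  have hle := setOType_mono (inter_subset_inter_right x.val (Iio_subset_Iio (hγ' ξ hξα₁)))
  exact (hti.trans_lt (hle.trans_lt (setOType_inter_Iio_lt_of_lt hγ'x (lt_succ γ')))).false

theorem eventually_sSup_inter_Iio_eq {α : Ordinal} (hα : α < μ.ord) (hlim : IsSuccLimit α)
    (hcof : α.cof < κ) : ∀ᶠ x in hU.ae, sSup (x.val ∩ Iio α) = α := by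
  obtain ⟨G, hGlt, hGcof⟩ := exists_cofinal_fun α
  filter_upwards [hU.eventually_forall_lt_of_lt_ord (ord_lt_ord.2 hcof) fun i hi =>
    hU.eventually_mem ((hGlt i hi).trans hα)] with x hx
  refine (sSup_inter_Iio_le _ _).antisymm (le_of_forall_lt fun y hy => ?_)
  obtain ⟨i, hi, hyi⟩ := hGcof _ (hlim.succ_lt hy)
  exact (lt_succ y).trans_le (hyi.trans (le_csSup (bddAbove_Iio.mono inter_subset_right)
    ⟨hx i hi, hGlt i hi⟩))

theorem exists_eventually_mem_Ico_sSup {C : Pk κ μ → Set Ordinal}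
    (hC : ∀ᶠ x in hU.ae, IsClubIn (C x) (sSup x.val))
    (hμ : IsSuccLimit μ.ord) {β : Ordinal} (hβ : β < μ.ord) :
    ∃ β' < μ.ord, β < β' ∧ ∀ᶠ x in hU.ae,
      ∃ d ∈ C x, sSup (x.val ∩ Iio β) ≤ d ∧ d < sSup (x.val ∩ Iio β') := by
  have : ∀ᶠ x in hU.ae, ∃ ξ ∈ x.val, ∃ d ∈ C x, sSup (x.val ∩ Iio β) ≤ d ∧ d < ξ := by
    filter_upwards [hC, hU.eventually_mem (hμ.succ_lt hβ)] with x hCx hβx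
    obtain ⟨d, hd, hβd⟩ := hCx.2.1 _ ((sSup_inter_Iio_le _ _).trans_lt
      ((lt_succ β).trans_le (le_csSup x.bddAbove hβx)))
    obtain ⟨ξ, hξ, hdξ⟩ := exists_lt_of_lt_csSup' (mem_Iio.1 (hCx.1 hd))
    exact ⟨ξ, hξ, d, hd, hβd, hdξ⟩
  obtain ⟨ξ, hξ, h⟩ := hU.exists_eventually_mem_and this
  refine ⟨succ (max β ξ), hμ.succ_lt (max_lt hβ hξ), (le_max_left _ _).trans_lt (lt_succ _), ?_⟩
  filter_upwards [h] with x ⟨hξx, d, hd, hβd, hdξ⟩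
  exact ⟨d, hd, hβd, hdξ.trans_le (le_csSup (bddAbove_Iio.mono inter_subset_right)
    ⟨hξx, mem_Iio.2 ((le_max_right _ _).trans_lt (lt_succ _))⟩)⟩

theorem exists_le_mem_traceSet {C : Pk κ μ → Set Ordinal}
    (hC : ∀ᶠ x in hU.ae, IsClubIn (C x) (sSup x.val)) (hκ : ℵ₀ < κ)
    (hμ : ℵ₀ < μ.ord.cof) {a : Ordinal} (ha : a < μ.ord) :
    ∃ α ∈ traceSet hU.ae C, a ≤ α := by
  have hμlim : IsSuccLimit μ.ord := one_lt_cof_iff.1 (one_lt_aleph0.trans hμ)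
  obtain ⟨c, rfl, hc, hcC, hcμ⟩ := exists_strictMono_chain hμ
    (fun _ β β' => ∀ᶠ x in hU.ae, ∃ d ∈ C x, sSup (x.val ∩ Iio β) ≤ d ∧ d < sSup (x.val ∩ Iio β'))
    (fun _ _ hβ => hU.exists_eventually_mem_Ico_sSup hC hμlim hβ) ha
  refine ⟨_, ⟨hcμ, ?_⟩, Ordinal.le_iSup c 0⟩
  filter_upwards [hC, hU.eventually_forall_of_mk_lt (by rwa [mk_nat]) hcC,
    hU.eventually_mem (hμlim.succ_lt hcμ)] with x hCx hx hsx
  rw [sSup_inter_Iio_iSup]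
  refine hCx.2.2 _ ?_ (iSup_mem_accPts fun n => ?_)
  · rw [← sSup_inter_Iio_iSup]
    exact (sSup_inter_Iio_le _ _).trans_lt ((lt_succ _).trans_le (le_csSup x.bddAbove hsx))
  · obtain ⟨d, hd, h1, h2⟩ := hx n
    exact ⟨d, hd, h1, h2.trans_le (Ordinal.le_iSup (fun n => sSup (x.val ∩ Iio (c n))) (n + 1))⟩

theorem mem_traceSet_of_mem_accPts {C : Pk κ μ → Set Ordinal}
    (hC : ∀ᶠ x in hU.ae, IsClubIn (C x) (sSup x.val)) {α : Ordinal}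
    (hμ : IsSuccLimit μ.ord) (hα : α ∈ accPts (traceSet hU.ae C)) (hαμ : α < μ.ord)
    (hcof : α.cof < κ) :
    α ∈ traceSet hU.ae C := by
  have hlim := isSuccLimit_of_mem_accPts hα
  obtain ⟨G, hGE, hGcof⟩ := exists_cofinal_fun_of_mem_accPts hα
  refine ⟨hαμ, ?_⟩
  filter_upwards [hC,
    hU.eventually_forall_lt_of_lt_ord (ord_lt_ord.2 hcof) fun i hi => (hGE i hi).1.2,
    hU.eventually_sSup_inter_Iio_eq hαμ hlim hcof, hU.eventually_mem (hμ.succ_lt hαμ)]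
    with x hCx hGx hsup hαx
  rw [hsup]
  refine hCx.2.2 α ((lt_succ α).trans_le (le_csSup x.bddAbove hαx)) ⟨hα.1, fun y hy => ?_⟩
  obtain ⟨ξ, ⟨hξx, hξα⟩, hyξ⟩ := exists_lt_of_lt_csSup' (hsup.symm ▸ hy)
  obtain ⟨i, hi, hξi⟩ := hGcof _ (hlim.succ_lt hξα)
  exact ⟨_, hGx i hi, hyξ.trans_le (le_csSup (bddAbove_Iio.mono inter_subset_right)
    ⟨hξx, (lt_succ ξ).trans_le hξi⟩), (sSup_inter_Iio_le _ _).trans_lt (hGE i hi).2⟩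

theorem eventually_isStatIn_inter {S : Set Ordinal} (hκ : ℵ₀ < κ) (hμ : μ.IsRegular)
    (hℵμ : ℵ₀ < μ) (hS : ∀ α ∈ S, α < μ.ord ∧ IsSuccLimit α ∧ α.cof < κ)
    (hSstat : IsStatIn S μ.ord) :
    ∀ᶠ x in hU.ae, IsStatIn (S ∩ x.val) (sSup x.val) := by
  by_contra hcon
  rw [← Ultrafilter.eventually_not] at hcon
  have hclub : ∀ x : Pk κ μ, ¬IsStatIn (S ∩ x.val) (sSup x.val) →
      ∃ C, IsClubIn C (sSup x.val) ∧ S ∩ x.val ∩ C = ∅ := fun x hx => by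
    simpa only [IsStatIn, not_forall, exists_prop, not_nonempty_iff_eq_empty] using hx
  choose! C hC using hclub
  have hCclub := hcon.mono fun x hx => (hC x hx).1
  have hμlim : IsSuccLimit μ.ord := isSuccLimit_ord hμ.aleph0_le
  -- `S` meets the closure of the trace of `C`, hence the trace itself
  obtain ⟨α, hαS, hαE⟩ := hSstat _ (isClubIn_union_accPts (fun _ h => h.1) fun _ ha =>
    hU.exists_le_mem_traceSet hCclub hκ (by rwa [hμ.cof_ord]) ha)
  obtain ⟨hαμ, hαlim, hαcof⟩ := hS α hαS
  have hαE' : α ∈ traceSet hU.ae C :=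
    hαE.elim id fun h => hU.mem_traceSet_of_mem_accPts hCclub hμlim h.1 hαμ hαcof
  obtain ⟨x, hx, hxC, hsup, hαx⟩ := (hcon.and (hαE'.2.and
    ((hU.eventually_sSup_inter_Iio_eq hαμ hαlim hαcof).and (hU.eventually_mem hαμ)))).exists
  rw [hsup] at hxC
  exact ((hC x hx).2.subset ⟨⟨hαS, hαx⟩, hxC⟩ : α ∈ (∅ : Set Ordinal))

end IsNormalFineUF

theorem IsNormalFineUF.exists_subalgebra_isStatIn_inter {κ μ : Cardinal.{0}}
    {U : Set (Set (Pk κ μ))} (hU : IsNormalFineUF κ μ U) (hμ : μ.IsRegular) {ι : Type}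
    (hι : #ι < κ) (n : ι → ℕ) (f : ∀ i, (Fin (n i) → Ordinal) → Ordinal)
    (hf : ∀ i v, (∀ j, v j < μ.ord) → f i v < μ.ord) {S : Set Ordinal}
    (hS : ∀ α ∈ S, α < μ.ord ∧ IsSuccLimit α ∧ α.cof < κ) (hSstat : IsStatIn S μ.ord) :
    ∃ B ⊆ Iio μ.ord, ClosedUnderOps n f B ∧
      (∃ c : Cardinal, c.IsRegular ∧ c < κ ∧ SetOType B = Ordinal.lift.{1} c.ord) ∧
      IsStatIn (S ∩ B) (sSup B) := by
  obtain ⟨α₀, hα₀S, -⟩ := hSstat _ (isClubIn_Iio μ.ord)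
  obtain ⟨hα₀μ, hα₀lim, hα₀cof⟩ := hS α₀ hα₀S
  have hκ : ℵ₀ < κ := (aleph0_le_cof_iff.2 (one_lt_cof_iff.2 hα₀lim)).trans_lt hα₀cof
  have hℵμ : ℵ₀ < μ := by
    rw [← ord_lt_ord, ord_aleph0]
    exact (omega0_le_of_isSuccLimit hα₀lim).trans_lt hα₀μ
  obtain ⟨x, hops, hreg, hstat, hω⟩ := ((hU.eventually_closedUnderOps hι n f hf).and
    ((hU.eventually_ord_cof_setOType_eq hμ).and ((hU.eventually_isStatIn_inter hκ hμ hℵμ hS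
      hSstat).and (hU.eventually_Iio_omega0_subset hκ hℵμ.le)))).exists
  refine ⟨x.val, x.2.1, hops, exists_isRegular_setOType_eq x.2.2 ?_ hreg, hstat⟩
  simpa only [setOType_Iio, lift_omega0] using setOType_mono hω

/-- If `λ` is the supremum of an increasing `ω`-sequence of supercompact cardinals, then
`Δ_{λ,λ⁺}` holds: every stationary `S ⊆ E^{λ⁺}_{<λ}` reflects to a subalgebra of regular
order type `< λ` of any given algebra on `λ⁺` with `ν < λ` many operations. -/
theorem stmt3 (κs : ℕ → Cardinal) (hmono : StrictMono κs)
    (hsc : ∀ m, IsSupercompact (κs m))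
    (lam : Cardinal) (hlam : lam = ⨆ m, κs m)
    (ν : Cardinal) (hν : ν < lam)
    (ι : Type) (hι : Cardinal.mk ι = ν)
    (n : ι → ℕ) (f : ∀ i, (Fin (n i) → Ordinal) → Ordinal)
    (hf : ∀ i v, (∀ j, v j < (Order.succ lam).ord) → f i v < (Order.succ lam).ord)
    (S : Set Ordinal) (hSsub : S ⊆ Set.Iio (Order.succ lam).ord)
    (hScof : ∀ α ∈ S, Ordinal.cof α < lam)
    (hSstat : IsStatIn S (Order.succ lam).ord) :
    ∃ B : Set Ordinal, B ⊆ Set.Iio (Order.succ lam).ord ∧ ClosedUnderOps n f B ∧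
      (∃ c : Cardinal, c.IsRegular ∧ c < lam ∧ SetOType B = Ordinal.lift.{1} c.ord) ∧
      IsStatIn (S ∩ B) (sSup B) := by
  have hκlt : ∀ m, κs m < lam := fun m =>
    (hmono m.lt_succ_self).trans_le (hlam ▸ le_ciSup (Cardinal.bddAbove_of_small) (m + 1))
  have hlam₀ : ℵ₀ ≤ lam :=
    aleph0_le.2 fun m => (natCast_le_of_strictMono hmono m).trans (hκlt m).le
  have hμ : (succ lam).IsRegular := isRegular_succ hlam₀
  obtain ⟨m₀, hm₀⟩ := hSstat.exists_isStatIn_of_subset_iUnion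
    (by rw [hμ.cof_ord]; exact hlam₀.trans_lt (lt_succ lam)) (T := fun m => {α | α.cof < κs m})
    fun α hα => mem_iUnion.2 (exists_lt_of_lt_ciSup' (hlam ▸ hScof α hα))
  obtain ⟨m₁, hm₁⟩ := exists_lt_of_lt_ciSup' (hlam ▸ hν)
  set m := max m₀ m₁
  obtain ⟨U, hU⟩ := hsc m _ ((hκlt m).le.trans (le_succ lam))
  obtain ⟨B, hBμ, hBops, ⟨c, hc, hcκ, hBc⟩, hBS⟩ := hU.exists_subalgebra_isStatIn_inter hμ
    (hι ▸ hm₁.trans_le (hmono.monotone (le_max_right _ _))) n f hf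
    (fun α hα => ⟨hSsub hα.1, hα.2.1, hα.2.2.trans_le (hmono.monotone (le_max_left _ _))⟩) hm₀
  exact ⟨B, hBμ, hBops, ⟨c, hc, hcκ.trans (hκlt m), hBc⟩,
    hBS.mono (inter_subset_inter_left _ fun _ hα => hα.1)⟩
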